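/- (Kernel-distance bound on the empirical IPM for hinge loss.) Define φ : ℝ^d × ℝ → ℝ^{d+1} by φ(u, y) = (y·u, 1). Let {(ψ_i, y_i)}_{i=1}^{m} and {(ψ'_i, y'_i)}_{i=1}^{n} be two finite samples in ℝ^d × ℝ with nonnegative weights a_i and b_i respectively, such that all points satisfy ‖ψ‖₂ ≤ 1 and y ∈ [−1, 1]. Then for every w ∈ ℝ^d with ‖w‖₂ ≤ 1, |∑_{i=1}^{m} a_i·max(1 − y_i⟨ψ_i, w⟩, 0) − ∑_{i=1}^{n} b_i·max(1 − y'_i⟨ψ'_i, w⟩, 0)| ≤ √2·‖∑_{i=1}^{m} a_i φ(ψ_i, y_i) − ∑_{i=1}^{n} b_i φ(ψ'_i, y'_i)‖₂. -/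

import Mathlib

/-
On the domain `‖ψ‖ ≤ 1`, `y ∈ [-1, 1]`, `‖w‖ ≤ 1` the hinge is never active, so the hinge loss
`1 - y⟪ψ, w⟫` is the linear functional `⟪φ(ψ, y), (-w, 1)⟫` of the feature vector. Both weighted
sums are therefore one inner product with `(-w, 1)`, and Cauchy–Schwarz bounds it by
`‖(-w, 1)‖ ≤ √2` times the distance of the feature means.
-/

open scoped InnerProductSpace

/-- The feature map `φ(u, y) = (y·u, 1)` taking values in the Euclidean space
`ℝ^d × ℝ ≅ ℝ^{d+1}` (indexed by `Fin d ⊕ Unit`). -/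
noncomputable def phiHinge {d : ℕ} (u : EuclideanSpace ℝ (Fin d)) (y : ℝ) :
    EuclideanSpace ℝ (Fin d ⊕ Unit) :=
  (WithLp.equiv 2 _).symm (Sum.elim (fun i => y * u i) fun _ => (1 : ℝ))

theorem abs_sum_mul_inner_sub_sum_mul_inner_le {E ι κ : Type*} [NormedAddCommGroup E]
    [InnerProductSpace ℝ E] [Fintype ι] [Fintype κ] (a : ι → ℝ) (x : ι → E) (b : κ → ℝ)
    (x' : κ → E) (v : E) :
    |(∑ i, a i * ⟪x i, v⟫_ℝ) - ∑ j, b j * ⟪x' j, v⟫_ℝ| ≤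
      ‖v‖ * ‖(∑ i, a i • x i) - ∑ j, b j • x' j‖ := by
  have hlin : (∑ i, a i * ⟪x i, v⟫_ℝ) - ∑ j, b j * ⟪x' j, v⟫_ℝ =
      ⟪(∑ i, a i • x i) - ∑ j, b j • x' j, v⟫_ℝ := by
    simp only [inner_sub_left, sum_inner, real_inner_smul_left]
  rw [hlin, mul_comm]
  exact abs_real_inner_le_norm _ _

theorem max_one_sub_mul_inner_zero_eq {E : Type*} [NormedAddCommGroup E]
    [InnerProductSpace ℝ E] {u w : E} {t : ℝ} (hu : ‖u‖ ≤ 1) (hw : ‖w‖ ≤ 1)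
    (ht : t ∈ Set.Icc (-1 : ℝ) 1) :
    max (1 - t * ⟪u, w⟫_ℝ) 0 = 1 - t * ⟪u, w⟫_ℝ := by
  have hinner : |⟪u, w⟫_ℝ| ≤ 1 :=
    (abs_real_inner_le_norm u w).trans (mul_le_one₀ hu (norm_nonneg w) hw)
  have hprod : |t * ⟪u, w⟫_ℝ| ≤ 1 := by
    rw [abs_mul]
    exact mul_le_one₀ (abs_le.mpr ht) (abs_nonneg _) hinner
  exact max_eq_left (sub_nonneg.mpr (abs_le.mp hprod).2)

noncomputable def hingeWeight {d : ℕ} (w : EuclideanSpace ℝ (Fin d)) :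
    EuclideanSpace ℝ (Fin d ⊕ Unit) :=
  (WithLp.equiv 2 _).symm (Sum.elim (fun i => -w i) fun _ => (1 : ℝ))

theorem inner_phiHinge_hingeWeight {d : ℕ} (u w : EuclideanSpace ℝ (Fin d)) (t : ℝ) :
    ⟪phiHinge u t, hingeWeight w⟫_ℝ = 1 - t * ⟪u, w⟫_ℝ := by
  simp [phiHinge, hingeWeight, PiLp.inner_apply, Fintype.sum_sum_type, Finset.mul_sum,
    sub_eq_add_neg, mul_comm, mul_assoc, add_comm]

theorem norm_hingeWeight_sq {d : ℕ} (w : EuclideanSpace ℝ (Fin d)) :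
    ‖hingeWeight w‖ ^ 2 = ‖w‖ ^ 2 + 1 := by
  simp [hingeWeight, EuclideanSpace.norm_sq_eq, Fintype.sum_sum_type]

theorem norm_hingeWeight_le_sqrt_two {d : ℕ} {w : EuclideanSpace ℝ (Fin d)} (hw : ‖w‖ ≤ 1) :
    ‖hingeWeight w‖ ≤ Real.sqrt 2 := by
  apply Real.le_sqrt_of_sq_le
  rw [norm_hingeWeight_sq]
  nlinarith [norm_nonneg w]

theorem hinge_loss_ipm_le_kernel_distance_general {d : ℕ} (m n : ℕ)
    (a : Fin m → ℝ) (ψ : Fin m → EuclideanSpace ℝ (Fin d)) (y : Fin m → ℝ)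
    (b : Fin n → ℝ) (ψ' : Fin n → EuclideanSpace ℝ (Fin d)) (y' : Fin n → ℝ)
    (hψ : ∀ i, ‖ψ i‖ ≤ 1) (hψ' : ∀ i, ‖ψ' i‖ ≤ 1)
    (hy : ∀ i, y i ∈ Set.Icc (-1 : ℝ) 1) (hy' : ∀ i, y' i ∈ Set.Icc (-1 : ℝ) 1)
    (w : EuclideanSpace ℝ (Fin d)) (hw : ‖w‖ ≤ 1) :
    |(∑ i, a i * max (1 - y i * ⟪ψ i, w⟫_ℝ) 0) -
        ∑ i, b i * max (1 - y' i * ⟪ψ' i, w⟫_ℝ) 0| ≤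
      Real.sqrt 2 * ‖(∑ i, a i • phiHinge (ψ i) (y i)) - ∑ i, b i • phiHinge (ψ' i) (y' i)‖ := by
  have hloss : ∀ {u : EuclideanSpace ℝ (Fin d)} {t : ℝ}, ‖u‖ ≤ 1 → t ∈ Set.Icc (-1 : ℝ) 1 →
      max (1 - t * ⟪u, w⟫_ℝ) 0 = ⟪phiHinge u t, hingeWeight w⟫_ℝ := fun hu ht => by
    rw [max_one_sub_mul_inner_zero_eq hu hw ht, inner_phiHinge_hingeWeight]
  simp only [fun i => hloss (hψ i) (hy i), fun i => hloss (hψ' i) (hy' i)]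
  exact (abs_sum_mul_inner_sub_sum_mul_inner_le _ _ _ _ _).trans
    (mul_le_mul_of_nonneg_right (norm_hingeWeight_le_sqrt_two hw) (norm_nonneg _))

/-- Kernel-distance bound on the empirical IPM for hinge loss: the weighted difference of
hinge losses of a norm-bounded linear model on two weighted samples in the constrained
domain (`‖ψ‖₂ ≤ 1`, `y ∈ [−1,1]`) is bounded by `√2` times the empirical kernel distance
(MMD) between the samples for the kernel induced by `φ`. -/
theorem hinge_loss_ipm_le_kernel_distance {d : ℕ} (m n : ℕ)
    (a : Fin m → ℝ) (ψ : Fin m → EuclideanSpace ℝ (Fin d)) (y : Fin m → ℝ)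
    (b : Fin n → ℝ) (ψ' : Fin n → EuclideanSpace ℝ (Fin d)) (y' : Fin n → ℝ)
    (ha : ∀ i, 0 ≤ a i) (hb : ∀ i, 0 ≤ b i)
    (hψ : ∀ i, ‖ψ i‖ ≤ 1) (hψ' : ∀ i, ‖ψ' i‖ ≤ 1)
    (hy : ∀ i, y i ∈ Set.Icc (-1 : ℝ) 1) (hy' : ∀ i, y' i ∈ Set.Icc (-1 : ℝ) 1)
    (w : EuclideanSpace ℝ (Fin d)) (hw : ‖w‖ ≤ 1) :
    |(∑ i, a i * max (1 - y i * ⟪ψ i, w⟫_ℝ) 0) -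
        ∑ i, b i * max (1 - y' i * ⟪ψ' i, w⟫_ℝ) 0| ≤
      Real.sqrt 2 * ‖(∑ i, a i • phiHinge (ψ i) (y i)) - ∑ i, b i • phiHinge (ψ' i) (y' i)‖ :=
  hinge_loss_ipm_le_kernel_distance_general m n a ψ y b ψ' y' hψ hψ' hy hy' w hw
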